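/- The soft-thresholding risk τ ↦ r(τ; G) is a quasi-convex function of τ on [0, ∞); that is, for all τ₁, τ₂ ≥ 0 and α ∈ [0,1], r(ατ₁ + (1−α)τ₂; G) ≤ max(r(τ₁; G), r(τ₂; G)). -/

import Mathlib

open MeasureTheory

/-- Standard Gaussian density `φ(z) = e^{-z²/2}/√(2π)`. -/
noncomputable def gaussPDF (z : ℝ) : ℝ := Real.exp (-z ^ 2 / 2) / Real.sqrt (2 * Real.pi)

/-- Soft-thresholding function `η(x; τ) = sign(x)·max(|x| − τ, 0)`. -/
noncomputable def softThr (x τ : ℝ) : ℝ := Real.sign x * max (|x| - τ) 0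

/-- Soft-thresholding risk `r(τ; G) = E_{μ∼G, Z∼N(0,1)}[(η(μ + Z; τ) − μ)²]`. -/
noncomputable def stRisk (G : Measure ℝ) (τ : ℝ) : ℝ :=
  ∫ m, (∫ z, (softThr (m + z) τ - m) ^ 2 * gaussPDF z) ∂G

/-!
For a point mass `μ = m` and `τ ≥ 0` the risk is `pointRisk τ m`, an explicit expression in the
Gaussian density `φ` and tail `Q = gaussTail`. Its `τ`-derivative
`pointRiskDeriv τ m = 2 (τ (Q (τ - m) + Q (τ + m)) - φ (τ - m) - φ (τ + m))` becomes nondecreasing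
after multiplication by `exp (τ² / 2)`: the derivative of the product is
`2 exp (τ² / 2) (∫_{τ-m}^∞ (z - τ)² φ + ∫_{τ+m}^∞ (z - τ)² φ) ≥ 0`. Averaging over `G`,
`exp (τ² / 2) r'(τ)` is nondecreasing, so `r'` changes sign at most once, from negative to
nonnegative, and `r` is quasi-convex. Differentiation under the integral over `G` is justified
because the point risk equals `1` at `τ = 0` and has bounded `τ`-derivative, so it is bounded
in `m`.
-/

open Real Set Filter Topology

lemma quasiconvexOn_univ_of_monotone_mul_deriv {f f' c : ℝ → ℝ}
    (hf : ∀ x, HasDerivAt f (f' x) x) (hc : ∀ x, 0 < c x)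
    (hmono : Monotone fun x => c x * f' x) : QuasiconvexOn ℝ univ f := by
  have hcont : Continuous f := continuous_iff_continuousAt.2 fun x => (hf x).continuousAt
  intro r
  refine convex_iff_ordConnected.2 ⟨fun x hx y hy t ht => ⟨trivial, ?_⟩⟩
  by_cases! hsign : ∃ s ∈ Icc x t, 0 ≤ f' s
  · obtain ⟨s, hs, hs₀⟩ := hsign
    have hmon : MonotoneOn f (Icc t y) := by
      refine monotoneOn_of_hasDerivWithinAt_nonneg (convex_Icc t y) hcont.continuousOn
        (fun u _ => (hf u).hasDerivWithinAt) fun u hu => ?_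
      rw [interior_Icc] at hu
      exact nonneg_of_mul_nonneg_right
        ((mul_nonneg (hc s).le hs₀).trans (hmono (hs.2.trans hu.1.le))) (hc u)
    exact (hmon ⟨le_rfl, ht.2⟩ ⟨ht.2, le_rfl⟩ ht.2).trans hy.2
  · have hanti : AntitoneOn f (Icc x t) :=
      antitoneOn_of_hasDerivWithinAt_nonpos (convex_Icc x t) hcont.continuousOn
        (fun u _ => (hf u).hasDerivWithinAt) fun u hu => (hsign u (interior_subset hu)).le
    exact (hanti ⟨le_rfl, ht.1⟩ ⟨ht.1, le_rfl⟩ ht.1).trans hx.2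

lemma gaussPDF_eq_exp_neg_mul_sq (z : ℝ) : gaussPDF z = exp (-(1 / 2) * z ^ 2) / √(2 * π) := by
  rw [gaussPDF]; ring_nf

lemma gaussPDF_nonneg (z : ℝ) : 0 ≤ gaussPDF z := by
  unfold gaussPDF; positivity

lemma gaussPDF_le_one (z : ℝ) : gaussPDF z ≤ 1 := by
  have h2π : 1 ≤ √(2 * π) := one_le_sqrt.2 (by linarith [pi_gt_three])
  rw [gaussPDF, div_le_one (by positivity)]
  exact (exp_le_one_iff.2 (by nlinarith)).trans h2π

lemma gaussPDF_neg (z : ℝ) : gaussPDF (-z) = gaussPDF z := by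
  simp [gaussPDF]

@[fun_prop]
lemma continuous_gaussPDF : Continuous gaussPDF := by
  unfold gaussPDF; fun_prop

lemma hasDerivAt_gaussPDF (z : ℝ) : HasDerivAt gaussPDF (-z * gaussPDF z) z := by
  refine ((((hasDerivAt_pow 2 z).fun_neg.div_const 2).exp).div_const √(2 * π)).congr_deriv ?_
  rw [gaussPDF]; push_cast; ring

lemma integrable_pow_mul_gaussPDF (n : ℕ) : Integrable fun z => z ^ n * gaussPDF z := by
  have h := (integrable_rpow_mul_exp_neg_mul_sq (by norm_num : (0 : ℝ) < 1 / 2)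
    (neg_one_lt_zero.trans_le n.cast_nonneg)).div_const √(2 * π)
  simpa [gaussPDF_eq_exp_neg_mul_sq, rpow_natCast, mul_div_assoc] using h

lemma integrable_gaussPDF : Integrable gaussPDF := by
  simpa using integrable_pow_mul_gaussPDF 0

lemma integral_gaussPDF : ∫ z, gaussPDF z = 1 := by
  simp_rw [gaussPDF_eq_exp_neg_mul_sq, integral_div, integral_gaussian]
  rw [show π / (1 / 2) = 2 * π by ring, div_self (by positivity)]

lemma tendsto_pow_mul_gaussPDF_atTop (n : ℕ) :
    Tendsto (fun z => z ^ n * gaussPDF z) atTop (𝓝 0) := by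
  have h := ((tendsto_rpow_abs_mul_exp_neg_mul_sq_cocompact (by norm_num : (0 : ℝ) < 1 / 2)
    n).mono_left atTop_le_cocompact).div_const √(2 * π)
  rw [zero_div] at h
  refine h.congr' ?_
  filter_upwards [eventually_ge_atTop 0] with z hz
  rw [abs_of_nonneg hz, rpow_natCast, gaussPDF_eq_exp_neg_mul_sq, mul_div_assoc]

noncomputable def gaussTail (a : ℝ) : ℝ := ∫ z in Ioi a, gaussPDF z

lemma gaussTail_nonneg (a : ℝ) : 0 ≤ gaussTail a :=
  setIntegral_nonneg measurableSet_Ioi fun z _ => gaussPDF_nonneg z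

lemma gaussTail_le_one (a : ℝ) : gaussTail a ≤ 1 :=
  integral_gaussPDF ▸ setIntegral_le_integral integrable_gaussPDF (.of_forall gaussPDF_nonneg)

lemma gaussTail_neg (a : ℝ) : gaussTail (-a) = 1 - gaussTail a := by
  rw [gaussTail, ← integral_comp_neg_Iic, ← integral_gaussPDF,
    ← intervalIntegral.integral_Iic_add_Ioi (b := a) integrable_gaussPDF.integrableOn
      integrable_gaussPDF.integrableOn]
  simp [gaussTail, gaussPDF_neg]

lemma hasDerivAt_gaussTail (a : ℝ) : HasDerivAt gaussTail (-gaussPDF a) a := by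
  have h : gaussTail = fun x => gaussTail 0 - ∫ z in (0 : ℝ)..x, gaussPDF z := by
    ext x
    rw [← intervalIntegral.integral_Ioi_sub_Ioi' integrable_gaussPDF.integrableOn
      integrable_gaussPDF.integrableOn, gaussTail, gaussTail, sub_sub_cancel]
  rw [h]
  exact (continuous_gaussPDF.integral_hasStrictDerivAt 0 a).hasDerivAt.const_sub _

@[fun_prop]
lemma continuous_gaussTail : Continuous gaussTail :=
  continuous_iff_continuousAt.2 fun a => (hasDerivAt_gaussTail a).continuousAt

lemma integral_Ioi_mul_gaussPDF (a : ℝ) : ∫ z in Ioi a, z * gaussPDF z = gaussPDF a := by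
  have h := integral_Ioi_of_hasDerivAt_of_tendsto' (a := a) (f := fun z => -gaussPDF z)
    (f' := fun z => z * gaussPDF z) (fun x _ => (hasDerivAt_gaussPDF x).neg.congr_deriv (by ring))
    (by simpa using (integrable_pow_mul_gaussPDF 1).integrableOn)
    (by simpa using (tendsto_pow_mul_gaussPDF_atTop 0).neg)
  simpa using h

lemma tendsto_gaussTail_atTop : Tendsto gaussTail atTop (𝓝 0) := by
  refine tendsto_of_tendsto_of_tendsto_of_le_of_le' tendsto_const_nhds
    (by simpa using tendsto_pow_mul_gaussPDF_atTop 0) (.of_forall gaussTail_nonneg) ?_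
  filter_upwards [eventually_ge_atTop 1] with a ha
  rw [gaussTail, ← integral_Ioi_mul_gaussPDF]
  refine setIntegral_mono_on integrable_gaussPDF.integrableOn
    (by simpa using (integrable_pow_mul_gaussPDF 1).integrableOn) measurableSet_Ioi fun z hz => ?_
  exact le_mul_of_one_le_left (gaussPDF_nonneg z) (ha.trans (le_of_lt hz))

lemma integrable_sub_sq_mul_gaussPDF (c : ℝ) : Integrable fun z => (z - c) ^ 2 * gaussPDF z := by
  refine (((integrable_pow_mul_gaussPDF 2).sub
    ((integrable_pow_mul_gaussPDF 1).const_mul (2 * c))).add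
    (integrable_gaussPDF.const_mul (c ^ 2))).congr (.of_forall fun z => ?_)
  simp only [Pi.add_apply, Pi.sub_apply]; ring

lemma integral_Ioi_sub_sq_mul_gaussPDF (a c : ℝ) :
    ∫ z in Ioi a, (z - c) ^ 2 * gaussPDF z
      = (1 + c ^ 2) * gaussTail a + (a - 2 * c) * gaussPDF a := by
  have hderiv (z : ℝ) :
      HasDerivAt (fun z => -((z - 2 * c) * gaussPDF z) - (1 + c ^ 2) * gaussTail z)
        ((z - c) ^ 2 * gaussPDF z) z :=
    ((((hasDerivAt_id z).sub_const _).mul (hasDerivAt_gaussPDF z)).neg.sub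
      ((hasDerivAt_gaussTail z).const_mul _)).congr_deriv (by simp only [id]; ring)
  have hlim : Tendsto (fun z => -((z - 2 * c) * gaussPDF z) - (1 + c ^ 2) * gaussTail z)
      atTop (𝓝 0) := by
    have h := ((tendsto_pow_mul_gaussPDF_atTop 1).sub
      ((tendsto_pow_mul_gaussPDF_atTop 0).const_mul (2 * c))).neg.sub
      (tendsto_gaussTail_atTop.const_mul (1 + c ^ 2))
    simp only [mul_zero, sub_zero, neg_zero] at h
    exact h.congr fun z => by ring
  rw [integral_Ioi_of_hasDerivAt_of_tendsto' (fun z _ => hderiv z)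
    (integrable_sub_sq_mul_gaussPDF c).integrableOn hlim]
  ring

lemma softThr_eq_max_add_min {τ : ℝ} (hτ : 0 ≤ τ) (x : ℝ) :
    softThr x τ = max (x - τ) 0 + min (x + τ) 0 := by
  rcases lt_trichotomy x 0 with hx | rfl | hx
  · rw [softThr, Real.sign_of_neg hx, abs_of_neg hx, max_eq_right (a := x - τ) (by linarith)]
    rcases le_total (x + τ) 0 with h | h
    · rw [max_eq_left (by linarith), min_eq_left h]; ring
    · rw [max_eq_right (by linarith), min_eq_right h]; ring
  · simp [softThr, hτ]
  · rw [softThr, Real.sign_of_pos hx, abs_of_pos hx, min_eq_right (by linarith)]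
    ring

lemma abs_softThr_le {τ : ℝ} (hτ : 0 ≤ τ) (x : ℝ) : |softThr x τ| ≤ |x| := by
  rw [softThr_eq_max_add_min hτ, abs_le]
  grind

lemma continuous_softThr {τ : ℝ} (hτ : 0 ≤ τ) : Continuous fun x => softThr x τ := by
  simp_rw [softThr_eq_max_add_min hτ]
  fun_prop

noncomputable def pointRisk (τ m : ℝ) : ℝ :=
  m ^ 2 + (1 + τ ^ 2 - m ^ 2) * (gaussTail (τ - m) + gaussTail (τ + m))
    - (τ + m) * gaussPDF (τ - m) - (τ - m) * gaussPDF (τ + m)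

lemma integrable_softThr_sub_sq_mul_gaussPDF {τ : ℝ} (hτ : 0 ≤ τ) (m : ℝ) :
    Integrable fun z => (softThr (m + z) τ - m) ^ 2 * gaussPDF z := by
  have hmeas : Continuous fun z => (softThr (m + z) τ - m) ^ 2 * gaussPDF z := by
    have := continuous_softThr hτ; fun_prop
  refine (((integrable_sub_sq_mul_gaussPDF (-m)).const_mul 2).add
    (integrable_gaussPDF.const_mul (2 * m ^ 2))).mono' hmeas.aestronglyMeasurable
    (.of_forall fun z => ?_)
  have hη := sq_le_sq.2 (abs_softThr_le hτ (m + z))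
  have h : (softThr (m + z) τ - m) ^ 2 ≤ 2 * (z - -m) ^ 2 + 2 * m ^ 2 := by
    nlinarith [sq_nonneg (softThr (m + z) τ + m)]
  rw [norm_mul, Real.norm_of_nonneg (sq_nonneg _), Real.norm_of_nonneg (gaussPDF_nonneg z)]
  simp only [Pi.add_apply]
  nlinarith [mul_le_mul_of_nonneg_right h (gaussPDF_nonneg z)]

lemma integral_softThr_sub_sq_mul_gaussPDF {τ : ℝ} (hτ : 0 ≤ τ) (m : ℝ) :
    ∫ z, (softThr (m + z) τ - m) ^ 2 * gaussPDF z = pointRisk τ m := by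
  set g := fun z => (softThr (m + z) τ - m) ^ 2 * gaussPDF z
  have hg : Integrable g := integrable_softThr_sub_sq_mul_gaussPDF hτ m
  have hleft : ∫ z in Iic (-τ - m), g z
      = (1 + τ ^ 2) * gaussTail (τ + m) + (τ + m - 2 * τ) * gaussPDF (τ + m) := by
    rw [show -τ - m = -(τ + m) by ring, ← integral_comp_neg_Ioi,
      ← integral_Ioi_sub_sq_mul_gaussPDF]
    refine setIntegral_congr_fun measurableSet_Ioi fun z (hz : τ + m < z) => ?_
    simp only [g, softThr_eq_max_add_min hτ, gaussPDF_neg]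
    rw [max_eq_right (by linarith), min_eq_left (by linarith)]
    ring
  have hmid : ∫ z in (-τ - m)..(τ - m), g z
      = m ^ 2 * (1 - gaussTail (τ + m) - gaussTail (τ - m)) := by
    rw [intervalIntegral.integral_congr (g := fun z => m ^ 2 * gaussPDF z) fun z hz => ?_,
      intervalIntegral.integral_const_mul, ← intervalIntegral.integral_Ioi_sub_Ioi
        integrable_gaussPDF.integrableOn (by linarith),
      ← gaussTail, ← gaussTail, show -τ - m = -(τ + m) by ring, gaussTail_neg]
    rw [uIcc_of_le (by linarith)] at hz
    simp only [g, softThr_eq_max_add_min hτ]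
    rw [max_eq_right (by linarith [hz.2]), min_eq_right (by linarith [hz.1])]
    ring
  have hright : ∫ z in Ioi (τ - m), g z
      = (1 + τ ^ 2) * gaussTail (τ - m) + (τ - m - 2 * τ) * gaussPDF (τ - m) := by
    rw [← integral_Ioi_sub_sq_mul_gaussPDF]
    refine setIntegral_congr_fun measurableSet_Ioi fun z (hz : τ - m < z) => ?_
    simp only [g, softThr_eq_max_add_min hτ]
    rw [max_eq_left (by linarith), min_eq_right (by linarith)]
    ring
  rw [← intervalIntegral.integral_Iic_add_Ioi (b := -τ - m) hg.integrableOn hg.integrableOn,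
    ← intervalIntegral.integral_interval_add_Ioi (b := τ - m) hg.integrableOn hg.integrableOn,
    hleft, hmid, hright, pointRisk]
  ring

noncomputable def pointRiskDeriv (τ m : ℝ) : ℝ :=
  2 * (τ * (gaussTail (τ - m) + gaussTail (τ + m)) - (gaussPDF (τ - m) + gaussPDF (τ + m)))

lemma hasDerivAt_pointRisk (τ m : ℝ) :
    HasDerivAt (fun t => pointRisk t m) (pointRiskDeriv τ m) τ := by
  have hQ₁ := HasDerivAt.comp_sub_const τ m (hasDerivAt_gaussTail _)
  have hQ₂ := HasDerivAt.comp_add_const τ m (hasDerivAt_gaussTail _)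
  have hφ₁ := HasDerivAt.comp_sub_const τ m (hasDerivAt_gaussPDF _)
  have hφ₂ := HasDerivAt.comp_add_const τ m (hasDerivAt_gaussPDF _)
  have h := (((((hasDerivAt_pow 2 τ).const_add 1).sub_const (m ^ 2)).mul (hQ₁.add hQ₂)).const_add
    (m ^ 2)).sub (((hasDerivAt_id τ).add_const m).mul hφ₁) |>.sub
    (((hasDerivAt_id τ).sub_const m).mul hφ₂)
  exact h.congr_deriv (by simp only [pointRiskDeriv, id, Pi.add_apply]; push_cast; ring)

lemma monotone_exp_mul_pointRiskDeriv (m : ℝ) :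
    Monotone fun τ => exp (τ ^ 2 / 2) * pointRiskDeriv τ m := by
  have hQ₁ (τ : ℝ) := HasDerivAt.comp_sub_const τ m (hasDerivAt_gaussTail _)
  have hQ₂ (τ : ℝ) := HasDerivAt.comp_add_const τ m (hasDerivAt_gaussTail _)
  have hφ₁ (τ : ℝ) := HasDerivAt.comp_sub_const τ m (hasDerivAt_gaussPDF _)
  have hφ₂ (τ : ℝ) := HasDerivAt.comp_add_const τ m (hasDerivAt_gaussPDF _)
  refine monotone_of_hasDerivAt_nonneg (f' := fun τ => 2 * exp (τ ^ 2 / 2) *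
      ((∫ z in Ioi (τ - m), (z - τ) ^ 2 * gaussPDF z) +
        ∫ z in Ioi (τ + m), (z - τ) ^ 2 * gaussPDF z))
    (fun τ => ?_) fun τ => ?_
  · have h := (((hasDerivAt_pow 2 τ).div_const 2).exp).mul
      ((((hasDerivAt_id τ).mul ((hQ₁ τ).add (hQ₂ τ))).sub ((hφ₁ τ).add (hφ₂ τ))).const_mul 2)
    refine h.congr_deriv ?_
    rw [integral_Ioi_sub_sq_mul_gaussPDF, integral_Ioi_sub_sq_mul_gaussPDF]
    simp only [id, Pi.add_apply, Pi.sub_apply, Pi.mul_apply]; push_cast; ring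
  · have hK (a : ℝ) : 0 ≤ ∫ z in Ioi a, (z - τ) ^ 2 * gaussPDF z :=
      setIntegral_nonneg measurableSet_Ioi fun z _ => mul_nonneg (sq_nonneg _) (gaussPDF_nonneg z)
    exact mul_nonneg (by positivity) (add_nonneg (hK (τ - m)) (hK (τ + m)))

lemma pointRisk_zero (m : ℝ) : pointRisk 0 m = 1 := by
  have h := gaussTail_neg m
  simp only [pointRisk, zero_sub, zero_add, gaussPDF_neg] at h ⊢
  rw [h]; ring

lemma abs_pointRiskDeriv_le (τ m : ℝ) : |pointRiskDeriv τ m| ≤ 4 * (|τ| + 1) := by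
  have hQ := add_le_add (gaussTail_le_one (τ - m)) (gaussTail_le_one (τ + m))
  have hQ₀ := add_nonneg (gaussTail_nonneg (τ - m)) (gaussTail_nonneg (τ + m))
  have hφ := add_le_add (gaussPDF_le_one (τ - m)) (gaussPDF_le_one (τ + m))
  have hφ₀ := add_nonneg (gaussPDF_nonneg (τ - m)) (gaussPDF_nonneg (τ + m))
  have hτQ : |τ * (gaussTail (τ - m) + gaussTail (τ + m))| ≤ |τ| * 2 := by
    rw [abs_mul, abs_of_nonneg hQ₀]; gcongr; linarith
  rw [pointRiskDeriv, abs_mul, abs_two]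
  linarith [abs_sub (τ * (gaussTail (τ - m) + gaussTail (τ + m)))
    (gaussPDF (τ - m) + gaussPDF (τ + m)), abs_of_nonneg hφ₀]

lemma abs_pointRisk_le (τ m : ℝ) : |pointRisk τ m| ≤ 1 + 4 * (|τ| + 1) * |τ| := by
  have h := Convex.norm_image_sub_le_of_norm_hasDerivWithin_le (C := 4 * (|τ| + 1))
    (fun t _ => (hasDerivAt_pointRisk t m).hasDerivWithinAt)
    (fun t (ht : t ∈ Icc (-|τ|) |τ|) => (abs_pointRiskDeriv_le t m).trans
      (by linarith [abs_le.2 ht])) (convex_Icc _ _)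
    (⟨neg_nonpos.2 (abs_nonneg τ), abs_nonneg τ⟩ : (0 : ℝ) ∈ Icc (-|τ|) |τ|)
    (abs_le.1 le_rfl)
  rw [Real.norm_eq_abs, Real.norm_eq_abs, pointRisk_zero, sub_zero] at h
  linarith [abs_sub_abs_le_abs_sub (pointRisk τ m) 1, abs_one (α := ℝ)]

@[fun_prop]
lemma continuous_pointRisk (τ : ℝ) : Continuous (pointRisk τ) := by
  unfold pointRisk; fun_prop

@[fun_prop]
lemma continuous_pointRiskDeriv (τ : ℝ) : Continuous (pointRiskDeriv τ) := by
  unfold pointRiskDeriv; fun_prop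

section Mixture

variable (G : Measure ℝ) [IsFiniteMeasure G]

lemma integrable_pointRisk (τ : ℝ) : Integrable (pointRisk τ) G :=
  .of_bound (by fun_prop) _ (.of_forall fun m => abs_pointRisk_le τ m)

lemma integrable_pointRiskDeriv (τ : ℝ) : Integrable (pointRiskDeriv τ) G :=
  .of_bound (by fun_prop) _ (.of_forall fun m => abs_pointRiskDeriv_le τ m)

lemma hasDerivAt_integral_pointRisk (τ : ℝ) :
    HasDerivAt (fun t => ∫ m, pointRisk t m ∂G) (∫ m, pointRiskDeriv τ m ∂G) τ := by
  refine (hasDerivAt_integral_of_dominated_loc_of_deriv_le (bound := fun _ => 4 * (|τ| + 2))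
    (Metric.ball_mem_nhds τ one_pos) (.of_forall fun t => (integrable_pointRisk G t).1)
    (integrable_pointRisk G τ) (integrable_pointRiskDeriv G τ).1
    (.of_forall fun m t ht => ?_) (integrable_const _)
    (.of_forall fun m t _ => hasDerivAt_pointRisk t m)).2
  have ht' : |t| ≤ |τ| + 1 := by
    have := abs_sub_abs_le_abs_sub t τ
    rw [Metric.mem_ball, Real.dist_eq] at ht
    linarith
  rw [Real.norm_eq_abs]
  linarith [abs_pointRiskDeriv_le t m]

lemma monotone_exp_mul_integral_pointRiskDeriv :
    Monotone fun τ => exp (τ ^ 2 / 2) * ∫ m, pointRiskDeriv τ m ∂G := by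
  intro σ τ hστ
  simp only [← integral_const_mul]
  exact integral_mono ((integrable_pointRiskDeriv G σ).const_mul _)
    ((integrable_pointRiskDeriv G τ).const_mul _) fun m => monotone_exp_mul_pointRiskDeriv m hστ

end Mixture

theorem stRisk_quasiconvex_general (G : Measure ℝ) [IsProbabilityMeasure G] :
    ∀ τ₁ τ₂ α : ℝ, 0 ≤ τ₁ → 0 ≤ τ₂ → 0 ≤ α → α ≤ 1 →
      stRisk G (α * τ₁ + (1 - α) * τ₂) ≤ max (stRisk G τ₁) (stRisk G τ₂) := by
  intro τ₁ τ₂ α hτ₁ hτ₂ hα₀ hα₁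
  have hrisk {τ : ℝ} (hτ : 0 ≤ τ) : stRisk G τ = ∫ m, pointRisk τ m ∂G :=
    integral_congr_ae (.of_forall fun m => integral_softThr_sub_sq_mul_gaussPDF hτ m)
  have hquasi : QuasiconvexOn ℝ univ fun τ => ∫ m, pointRisk τ m ∂G :=
    quasiconvexOn_univ_of_monotone_mul_deriv (hasDerivAt_integral_pointRisk G)
      (fun τ => exp_pos _) (monotone_exp_mul_integral_pointRiskDeriv G)
  rw [hrisk hτ₁, hrisk hτ₂, hrisk (by positivity)]
  exact (quasiconvexOn_iff_le_max.1 hquasi).2 trivial trivial hα₀ (by linarith) (by ring)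

/-- the soft-thresholding risk `τ ↦ r(τ; G)` is quasi-convex on `[0, ∞)`. -/
theorem stRisk_quasiconvex (G : Measure ℝ) [IsProbabilityMeasure G]
    (hG : Integrable (fun m => m ^ 2) G) :
    ∀ τ₁ τ₂ α : ℝ, 0 ≤ τ₁ → 0 ≤ τ₂ → 0 ≤ α → α ≤ 1 →
      stRisk G (α * τ₁ + (1 - α) * τ₂) ≤ max (stRisk G τ₁) (stRisk G τ₂) :=
  stRisk_quasiconvex_general G
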